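/- Let N be a positive natural number, η = diag(1_N, −1_N). Let L be an invertible 2N×2N complex matrix and set H = L L†. Let U be a unitary 2N×2N complex matrix and E a diagonal 2N×2N matrix with strictly positive real diagonal entries such that U† (L† η L) U = η E. Let E^{1/2} denote the diagonal matrix whose diagonal entries are the positive square roots of those of E, and define P = (L†)⁻¹ U E^{1/2}. Then P† H P = E and P η P† = η; i.e. P para-unitarily diagonalizes H with spectrum E. -/

import Mathlib

open Matrix

/-! `H = L Lᴴ` is congruent via `(Lᴴ)⁻¹ U` to the identity, so `P = (Lᴴ)⁻¹ U E^{1/2}` gives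
`Pᴴ H P = E^{1/2} E^{1/2} = E`. Reading the hypothesis backwards, `Lᴴ η L = U (η E) Uᴴ`, and since
`E^{1/2}` commutes with the diagonal matrix `η`, `η E = E^{1/2} η E^{1/2}`; conjugating back by
`(Lᴴ)⁻¹ U` gives `P η Pᴴ = η`. -/

section Congruence

variable {n R : Type*} [Fintype n] [DecidableEq n] [CommRing R] [StarRing R]
  {L U : Matrix n n R}

noncomputable def bogoliubovTransform (L U S : Matrix n n R) : Matrix n n R := (Lᴴ)⁻¹ * U * S

theorem conjTranspose_bogoliubovTransform_mul_mul_self (hL : IsUnit L)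
    (hU : U ∈ unitaryGroup n R) (S : Matrix n n R) :
    (bogoliubovTransform L U S)ᴴ * (L * Lᴴ) * bogoliubovTransform L U S = Sᴴ * S := by
  have hUU : Uᴴ * U = 1 := mem_unitaryGroup_iff'.mp hU
  have hL_inv : L⁻¹ * L = 1 := nonsing_inv_mul L ((isUnit_iff_isUnit_det L).mp hL)
  have hLH_inv : Lᴴ * (Lᴴ)⁻¹ = 1 :=
    mul_nonsing_inv Lᴴ ((isUnit_iff_isUnit_det Lᴴ).mp ((isUnit_conjTranspose L).mpr hL))
  simp only [bogoliubovTransform, conjTranspose_mul, conjTranspose_nonsing_inv,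
    conjTranspose_conjTranspose, mul_assoc]
  rw [← mul_assoc Lᴴ, hLH_inv, one_mul, ← mul_assoc L⁻¹, hL_inv, one_mul, ← mul_assoc Uᴴ, hUU, one_mul]

theorem bogoliubovTransform_mul_mul_conjTranspose (hL : IsUnit L)
    (hU : U ∈ unitaryGroup n R) {S η : Matrix n n R}
    (h : Uᴴ * (Lᴴ * η * L) * U = S * η * Sᴴ) :
    bogoliubovTransform L U S * η * (bogoliubovTransform L U S)ᴴ = η := by
  have hUU : U * Uᴴ = 1 := mem_unitaryGroup_iff.mp hU
  have hUU_left (X : Matrix n n R) : U * (Uᴴ * X) = X := by rw [← mul_assoc, hUU, one_mul]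
  have hL_inv : L * L⁻¹ = 1 := mul_nonsing_inv L ((isUnit_iff_isUnit_det L).mp hL)
  have hLH_inv : (Lᴴ)⁻¹ * Lᴴ = 1 :=
    nonsing_inv_mul Lᴴ ((isUnit_iff_isUnit_det Lᴴ).mp ((isUnit_conjTranspose L).mpr hL))
  calc bogoliubovTransform L U S * η * (bogoliubovTransform L U S)ᴴ
      = (Lᴴ)⁻¹ * U * (S * η * Sᴴ) * Uᴴ * L⁻¹ := by
        simp only [bogoliubovTransform, conjTranspose_mul, conjTranspose_nonsing_inv,
          conjTranspose_conjTranspose, mul_assoc]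
    _ = ((Lᴴ)⁻¹ * Lᴴ) * η * (L * L⁻¹) := by
        rw [← h]
        simp only [mul_assoc, hUU_left]
    _ = η := by rw [hL_inv, hLH_inv, one_mul, mul_one]

end Congruence

section Diagonal

variable {m n : Type*} [DecidableEq m] [DecidableEq n]

theorem fromBlocks_one_zero_zero_neg_one {R : Type*} [Ring R] :
    fromBlocks (1 : Matrix m m R) 0 0 (-1 : Matrix n n R) = diagonal (Sum.elim 1 (-1)) := by
  rw [← diagonal_one, ← diagonal_one, diagonal_neg, fromBlocks_diagonal]
  rfl

theorem conjTranspose_diagonal_ofReal (d : n → ℝ) :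
    (diagonal fun i => (d i : ℂ))ᴴ = diagonal fun i => (d i : ℂ) :=
  isHermitian_diagonal_of_self_adjoint _ (funext fun i => Complex.conj_ofReal (d i))

theorem diagonal_ofReal_sqrt_mul_self [Fintype n] {d : n → ℝ} (hd : ∀ i, 0 ≤ d i) :
    (diagonal fun i => (√(d i) : ℂ)) * (diagonal fun i => (√(d i) : ℂ)) =
      diagonal fun i => (d i : ℂ) := by
  rw [diagonal_mul_diagonal]
  congr 1
  funext i
  rw [← Complex.ofReal_mul, Real.mul_self_sqrt (hd i)]

end Diagonal

theorem colpa_verification_general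
    (N : ℕ)
    (η : Matrix (Fin N ⊕ Fin N) (Fin N ⊕ Fin N) ℂ)
    (hη : η = Matrix.fromBlocks 1 0 0 (-1))
    (L : Matrix (Fin N ⊕ Fin N) (Fin N ⊕ Fin N) ℂ)
    (hL : IsUnit L)
    (H : Matrix (Fin N ⊕ Fin N) (Fin N ⊕ Fin N) ℂ)
    (hH : H = L * Lᴴ)
    (U : Matrix (Fin N ⊕ Fin N) (Fin N ⊕ Fin N) ℂ)
    (hU : U ∈ Matrix.unitaryGroup (Fin N ⊕ Fin N) ℂ)
    (d : (Fin N ⊕ Fin N) → ℝ) (hd : ∀ i, 0 < d i)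
    (E : Matrix (Fin N ⊕ Fin N) (Fin N ⊕ Fin N) ℂ)
    (hE : E = Matrix.diagonal fun i => (d i : ℂ))
    (hdiag : Uᴴ * (Lᴴ * η * L) * U = η * E)
    (sqrtE : Matrix (Fin N ⊕ Fin N) (Fin N ⊕ Fin N) ℂ)
    (hsqrtE : sqrtE = Matrix.diagonal fun i => (Real.sqrt (d i) : ℂ))
    (P : Matrix (Fin N ⊕ Fin N) (Fin N ⊕ Fin N) ℂ)
    (hPdef : P = (Lᴴ)⁻¹ * U * sqrtE) :
    Pᴴ * H * P = E ∧ P * η * Pᴴ = η := by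
  have hsqrtE_herm : sqrtEᴴ = sqrtE := by
    rw [hsqrtE]
    exact conjTranspose_diagonal_ofReal _
  have hsqrtE_sq : sqrtE * sqrtE = E := by
    rw [hsqrtE, hE]
    exact diagonal_ofReal_sqrt_mul_self fun i => (hd i).le
  have hcomm : sqrtE * η = η * sqrtE := by
    rw [hsqrtE, hη, fromBlocks_one_zero_zero_neg_one]
    exact (commute_diagonal _ _).eq
  have hP : P = bogoliubovTransform L U sqrtE := hPdef
  subst hP hH
  refine ⟨?_, bogoliubovTransform_mul_mul_conjTranspose hL hU ?_⟩
  · rw [conjTranspose_bogoliubovTransform_mul_mul_self hL hU, hsqrtE_herm, hsqrtE_sq]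
  · rw [hdiag, hsqrtE_herm, hcomm, mul_assoc, hsqrtE_sq]

/-- Verification step of Colpa's algorithm: if `H = L * Lᴴ` with `L` invertible,
`U` is unitary, and `Uᴴ * (Lᴴ * η * L) * U = η * E` with `E` diagonal with
strictly positive real diagonal entries, then `P = (Lᴴ)⁻¹ * U * E^{1/2}`
satisfies `Pᴴ * H * P = E` and `P * η * Pᴴ = η`. -/
theorem colpa_verification
    (N : ℕ) (hN : 0 < N)
    (η : Matrix (Fin N ⊕ Fin N) (Fin N ⊕ Fin N) ℂ)
    (hη : η = Matrix.fromBlocks 1 0 0 (-1))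
    (L : Matrix (Fin N ⊕ Fin N) (Fin N ⊕ Fin N) ℂ)
    (hL : IsUnit L)
    (H : Matrix (Fin N ⊕ Fin N) (Fin N ⊕ Fin N) ℂ)
    (hH : H = L * Lᴴ)
    (U : Matrix (Fin N ⊕ Fin N) (Fin N ⊕ Fin N) ℂ)
    (hU : U ∈ Matrix.unitaryGroup (Fin N ⊕ Fin N) ℂ)
    (d : (Fin N ⊕ Fin N) → ℝ) (hd : ∀ i, 0 < d i)
    (E : Matrix (Fin N ⊕ Fin N) (Fin N ⊕ Fin N) ℂ)
    (hE : E = Matrix.diagonal fun i => (d i : ℂ))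
    (hdiag : Uᴴ * (Lᴴ * η * L) * U = η * E)
    (sqrtE : Matrix (Fin N ⊕ Fin N) (Fin N ⊕ Fin N) ℂ)
    (hsqrtE : sqrtE = Matrix.diagonal fun i => (Real.sqrt (d i) : ℂ))
    (P : Matrix (Fin N ⊕ Fin N) (Fin N ⊕ Fin N) ℂ)
    (hPdef : P = (Lᴴ)⁻¹ * U * sqrtE) :
    Pᴴ * H * P = E ∧ P * η * Pᴴ = η :=
  colpa_verification_general N η hη L hL H hH U hU d hd E hE hdiag sqrtE hsqrtE P hPdef
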